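/- arXiv:2603.24845 — 4 statements merged into one kernel-verified Lean document; each statement's English description precedes it below -/
import Mathlib

section
/- Let 0 < |q| < 1 and let a, b be complex numbers such that q^{b+1+k} ≠ 1 for all integers k ≥ 0 (so the lower-parameter q-shifted factorials (q^{b+2};q)_n are nonzero and 1 - q^{b+1} ≠ 0), q^{a+b} ≠ 1, and such that λ := (1-q^b) q^{a+1} / (1-q^{a+b}) satisfies |λ| < 1. Then ∑_{n=0}^∞ [(q^{1-a};q)_n (q^b;q)_n / ((q;q)_n (q^{b+2};q)_n)] λ^n = [(1-q^{b+1})/(1-q)] · (λ q^{-a};q)_∞ / (λ;q)_∞. -/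
/-!
Write `w = q^b`, `A = q^{1-a}` and `μ = λ q^{-a}`. The series is then `₂φ₁(A, w; w q²; q, λ)`,
and the definition of `λ` amounts to the two relations `A λ = μ q` and `μ - w λ = (1 - w) q`.
Under these relations `(1 - w q)(1 - μ) t_n - (1 - q) T_n` telescopes, where `T_n` and `t_n`
are the `n`-th terms of `₂φ₁(A, w; w q²; q, λ)` and `₁φ₀(A; –; q, λ)`. Hence the series is
`(1 - w q)(1 - μ)/(1 - q) · ₁φ₀(A; –; q, λ)`, and the `q`-binomial theorem
`₁φ₀(A; –; q, λ) = (μ q; q)_∞ / (λ; q)_∞` finishes the proof, since `(1 - μ)(μ q; q)_∞ = (μ; q)_∞`.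
The `q`-binomial theorem itself comes from the functional equation
`(1 - z) F(z) = (1 - A z) F(q z)` (another telescoping sum), iterated and passed to the limit.
-/

/-- The finite `q`-shifted factorial `(a;q)_n = ∏_{k=0}^{n-1} (1 - a q^k)`. -/
noncomputable def qPoch (a q : ℂ) (n : ℕ) : ℂ :=
  ∏ k ∈ Finset.range n, (1 - a * q ^ k)

/-- The infinite `q`-shifted factorial `(a;q)_∞ = ∏_{k=0}^{∞} (1 - a q^k)`. -/
noncomputable def qPochInf (a q : ℂ) : ℂ :=
  ∏' k : ℕ, (1 - a * q ^ k)

open Filter Topology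

theorem HasSum.eq_of_eq_sub_succ {E : Type*} [AddCommGroup E] [TopologicalSpace E]
    [IsTopologicalAddGroup E] [T2Space E] {f k : ℕ → E} {a : E} (hf : HasSum f a)
    (hfk : ∀ n, f n = k n - k (n + 1)) (hk : Tendsto k atTop (𝓝 0)) : a = k 0 := by
  have hpartial : Tendsto (fun n ↦ ∑ i ∈ Finset.range n, f i) atTop (𝓝 (k 0 - 0)) := by
    simp only [hfk, Finset.sum_range_sub']
    exact tendsto_const_nhds.sub hk
  exact tendsto_nhds_unique hf.tendsto_sum_nat (by simpa using hpartial)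

theorem summable_of_succ_eq_mul_of_tendsto {R : Type*} [NormedRing R] [CompleteSpace R]
    {f ρ : ℕ → R} {z : R} (hz : ‖z‖ < 1) (hρ : Tendsto ρ atTop (𝓝 z))
    (hf : ∀ n, f (n + 1) = f n * ρ n) : Summable f := by
  obtain ⟨r, hzr, hr1⟩ := exists_between hz
  refine summable_of_ratio_norm_eventually_le hr1 ?_
  filter_upwards [hρ.norm.eventually_le_const hzr] with n hn
  calc ‖f (n + 1)‖ ≤ ‖f n‖ * ‖ρ n‖ := hf n ▸ norm_mul_le _ _
    _ ≤ r * ‖f n‖ := by rw [mul_comm]; exact mul_le_mul_of_nonneg_right hn (norm_nonneg _)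

theorem one_sub_ne_zero_of_norm_lt_one {R : Type*} [SeminormedRing R] [NormOneClass R] {x : R}
    (hx : ‖x‖ < 1) : 1 - x ≠ 0 :=
  sub_ne_zero.2 fun h ↦ by simp [← h] at hx

theorem qPoch_zero (a q : ℂ) : qPoch a q 0 = 1 := Finset.prod_range_zero _

theorem qPoch_succ (a q : ℂ) (n : ℕ) : qPoch a q (n + 1) = qPoch a q n * (1 - a * q ^ n) :=
  Finset.prod_range_succ _ _

theorem qPoch_add (a q : ℂ) (m n : ℕ) :
    qPoch a q (m + n) = qPoch a q m * qPoch (a * q ^ m) q n := by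
  simp only [qPoch, Finset.prod_range_add, pow_add, mul_assoc]

theorem qPoch_ne_zero {a q : ℂ} {n : ℕ} (h : ∀ k < n, 1 - a * q ^ k ≠ 0) : qPoch a q n ≠ 0 :=
  Finset.prod_ne_zero_iff.2 fun k hk ↦ h k (Finset.mem_range.1 hk)

theorem qPoch_mul_one_sub_mul_one_sub (w q : ℂ) (n : ℕ) :
    qPoch w q n * ((1 - w * q ^ n) * (1 - w * q ^ (n + 1))) =
      qPoch (w * q ^ 2) q n * ((1 - w) * (1 - w * q)) := by
  have h := (qPoch_add w q n 2).symm.trans (add_comm n 2 ▸ qPoch_add w q 2 n)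
  simp only [qPoch, Finset.prod_range_succ, Finset.prod_range_zero] at h ⊢
  linear_combination h

section Analysis

variable {q : ℂ}

theorem norm_pow_mul_lt_one {x : ℂ} (hq : ‖q‖ < 1) (hx : ‖x‖ < 1) (k : ℕ) :
    ‖q ^ k * x‖ < 1 := by
  rw [norm_mul, norm_pow]
  exact mul_lt_one_of_nonneg_of_lt_one_right (pow_le_one₀ (norm_nonneg q) hq.le)
    (norm_nonneg x) hx

theorem one_sub_pow_succ_ne_zero (hq : ‖q‖ < 1) (n : ℕ) : 1 - q ^ (n + 1) ≠ 0 :=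
  one_sub_ne_zero_of_norm_lt_one (pow_succ q n ▸ norm_pow_mul_lt_one hq hq n)

theorem tendsto_comp_pow_of_continuousAt {g : ℂ → ℂ} (hq : ‖q‖ < 1) (hg : ContinuousAt g 0) :
    Tendsto (fun n : ℕ ↦ g (q ^ n)) atTop (𝓝 (g 0)) :=
  hg.tendsto.comp (tendsto_pow_atTop_nhds_zero_of_norm_lt_one hq)

theorem summable_norm_mul_pow (x : ℂ) (hq : ‖q‖ < 1) : Summable fun k : ℕ ↦ ‖x * q ^ k‖ := by
  simpa only [norm_mul, norm_pow] using
    (summable_geometric_of_lt_one (norm_nonneg q) hq).mul_left ‖x‖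

theorem multipliable_one_sub_mul_pow (x : ℂ) (hq : ‖q‖ < 1) :
    Multipliable fun k : ℕ ↦ 1 - x * q ^ k := by
  simpa only [sub_eq_add_neg] using
    multipliable_one_add_of_summable (by simpa using summable_norm_mul_pow x hq)

theorem tendsto_qPoch (x : ℂ) (hq : ‖q‖ < 1) : Tendsto (qPoch x q) atTop (𝓝 (qPochInf x q)) :=
  (multipliable_one_sub_mul_pow x hq).hasProd.tendsto_prod_nat

theorem qPochInf_ne_zero {x : ℂ} (hq : ‖q‖ < 1) (hx : ‖x‖ < 1) : qPochInf x q ≠ 0 := by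
  simpa only [qPochInf, sub_eq_add_neg] using tprod_one_add_ne_zero_of_summable
    (fun k ↦ by simpa only [← sub_eq_add_neg] using
      one_sub_ne_zero_of_norm_lt_one (mul_comm (q ^ k) x ▸ norm_pow_mul_lt_one hq hx k))
    (by simpa using summable_norm_mul_pow x hq)

theorem qPochInf_eq_one_sub_mul (x : ℂ) (hq : ‖q‖ < 1) :
    qPochInf x q = (1 - x) * qPochInf (x * q) q := by
  have hshift (k : ℕ) : 1 - x * q ^ (k + 1) = 1 - x * q * q ^ k := by ring
  have hmult : Multipliable fun k : ℕ ↦ 1 - x * q ^ (k + 1) := by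
    simpa only [hshift] using multipliable_one_sub_mul_pow (x * q) hq
  unfold qPochInf
  rw [tprod_eq_zero_mul' (f := fun k ↦ 1 - x * q ^ k) hmult, pow_zero, mul_one]
  exact congrArg _ (tprod_congr hshift)

variable {a z : ℂ}

/-- `phi10Term a q z n` and `phi21Term a b c q z n` are the `n`-th terms of the basic
hypergeometric series `₁φ₀(a; –; q, z)` and `₂φ₁(a, b; c; q, z)`. -/
noncomputable def phi10Term (a q z : ℂ) (n : ℕ) : ℂ := qPoch a q n / qPoch q q n * z ^ n

theorem phi10Term_zero : phi10Term a q z 0 = 1 := by simp [phi10Term, qPoch_zero]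

theorem phi10Term_succ (n : ℕ) :
    phi10Term a q z (n + 1) = phi10Term a q z n * ((1 - a * q ^ n) * z / (1 - q * q ^ n)) := by
  simp only [phi10Term, qPoch_succ, pow_succ, mul_div_mul_comm]
  ring

theorem phi10Term_succ_mul_one_sub_pow (hq : ‖q‖ < 1) (n : ℕ) :
    phi10Term a q z (n + 1) * (1 - q ^ (n + 1)) = phi10Term a q z n * (1 - a * q ^ n) * z := by
  rw [phi10Term_succ, ← pow_succ', mul_assoc, div_mul_cancel₀ _ (one_sub_pow_succ_ne_zero hq n)]
  ring

theorem phi10Term_mul (c : ℂ) (n : ℕ) : phi10Term a q (c * z) n = phi10Term a q z n * c ^ n := by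
  simp only [phi10Term, mul_pow]
  ring

theorem summable_phi10Term (hq : ‖q‖ < 1) (hz : ‖z‖ < 1) : Summable (phi10Term a q z) := by
  refine summable_of_succ_eq_mul_of_tendsto hz ?_ phi10Term_succ
  simpa using tendsto_comp_pow_of_continuousAt (g := fun x ↦ (1 - a * x) * z / (1 - q * x)) hq
    (by fun_prop (disch := simp))

theorem one_sub_mul_tsum_phi10Term (hq : ‖q‖ < 1) (hz : ‖z‖ < 1) :
    (1 - z) * ∑' n, phi10Term a q z n = (1 - a * z) * ∑' n, phi10Term a q (q * z) n := by
  have hqz : ‖q * z‖ < 1 := pow_one q ▸ norm_pow_mul_lt_one hq hz 1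
  have hsum := ((summable_phi10Term (a := a) hq hz).hasSum.mul_left (1 - z)).sub
    ((summable_phi10Term (a := a) hq hqz).hasSum.mul_left (1 - a * z))
  have hk : Tendsto (fun n ↦ phi10Term a q z n * (1 - q ^ n)) atTop (𝓝 0) := by
    simpa using (summable_phi10Term hq hz).tendsto_atTop_zero.mul
      (tendsto_comp_pow_of_continuousAt (g := fun x ↦ 1 - x) hq (by fun_prop))
  have htel := hsum.eq_of_eq_sub_succ (fun n ↦ by
    rw [phi10Term_succ_mul_one_sub_pow hq, phi10Term_mul]
    ring) hk
  simpa [sub_eq_zero] using htel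

theorem tsum_phi10Term_mul_qPoch (hq : ‖q‖ < 1) (hz : ‖z‖ < 1) (M : ℕ) :
    (∑' n, phi10Term a q z n) * qPoch z q M =
      qPoch (a * z) q M * ∑' n, phi10Term a q (q ^ M * z) n := by
  induction M with
  | zero => simp [qPoch_zero]
  | succ M ih =>
    have hstep := one_sub_mul_tsum_phi10Term (a := a) hq (norm_pow_mul_lt_one hq hz M)
    rw [← mul_assoc q, ← pow_succ'] at hstep
    rw [qPoch_succ, qPoch_succ]
    linear_combination (1 - z * q ^ M) * ih + qPoch (a * z) q M * hstep

theorem tendsto_tsum_phi10Term_pow_mul (hq : ‖q‖ < 1) (hz : ‖z‖ < 1) :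
    Tendsto (fun M : ℕ ↦ ∑' n, phi10Term a q (q ^ M * z) n) atTop (𝓝 1) := by
  have hlim : ∑' n, phi10Term a q z n * 0 ^ n = 1 := by
    rw [tsum_eq_single 0 fun n hn ↦ by simp [zero_pow hn], phi10Term_zero, pow_zero, mul_one]
  rw [← hlim]
  refine tendsto_tsum_of_dominated_convergence
    (summable_norm_iff.2 (summable_phi10Term (a := a) hq hz)) (fun n ↦ ?_)
    (Eventually.of_forall fun M n ↦ ?_)
  · simpa only [phi10Term_mul] using
      tendsto_comp_pow_of_continuousAt (g := fun x ↦ phi10Term a q z n * x ^ n) hq (by fun_prop)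
  · rw [phi10Term_mul, norm_mul, norm_pow]
    exact mul_le_of_le_one_right (norm_nonneg _)
      (pow_le_one₀ (norm_nonneg _) (by simpa using pow_le_one₀ (norm_nonneg q) hq.le))

theorem tsum_phi10Term_mul_qPochInf (hq : ‖q‖ < 1) (hz : ‖z‖ < 1) :
    (∑' n, phi10Term a q z n) * qPochInf z q = qPochInf (a * z) q := by
  have hleft := (tendsto_qPoch z hq).const_mul (∑' n, phi10Term a q z n)
  have hright := (tendsto_qPoch (a * z) hq).mul (tendsto_tsum_phi10Term_pow_mul (a := a) hq hz)
  rw [mul_one] at hright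
  exact tendsto_nhds_unique hleft (hright.congr fun M ↦ (tsum_phi10Term_mul_qPoch hq hz M).symm)

variable {b c : ℂ}

noncomputable def phi21Term (a b c q z : ℂ) (n : ℕ) : ℂ :=
  qPoch a q n * qPoch b q n / (qPoch q q n * qPoch c q n) * z ^ n

theorem phi21Term_zero : phi21Term a b c q z 0 = 1 := by simp [phi21Term, qPoch_zero]

theorem phi21Term_succ (n : ℕ) :
    phi21Term a b c q z (n + 1) = phi21Term a b c q z n *
      ((1 - a * q ^ n) * (1 - b * q ^ n) * z / ((1 - q * q ^ n) * (1 - c * q ^ n))) := by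
  simp only [phi21Term, qPoch_succ, pow_succ, mul_div_mul_comm]
  ring

theorem phi21Term_eq_phi10Term_mul (n : ℕ) :
    phi21Term a b c q z n = phi10Term a q z n * (qPoch b q n / qPoch c q n) := by
  simp only [phi21Term, phi10Term, mul_div_mul_comm]
  ring

theorem summable_phi21Term (hq : ‖q‖ < 1) (hz : ‖z‖ < 1) : Summable (phi21Term a b c q z) := by
  refine summable_of_succ_eq_mul_of_tendsto hz ?_ phi21Term_succ
  simpa using tendsto_comp_pow_of_continuousAt
    (g := fun x ↦ (1 - a * x) * (1 - b * x) * z / ((1 - q * x) * (1 - c * x))) hq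
    (by fun_prop (disch := simp))

variable {w μ : ℂ}

/-- Found with the ansatz `C · phi10Term a q z n · (1 - q^n) / (1 - w q^n)`; matching the
coefficients of `q^{2n}` forces `C = w`. -/
noncomputable def gosperCertificate (a w q z : ℂ) (n : ℕ) : ℂ :=
  phi10Term a q z n * (w * (1 - q ^ n) / (1 - w * q ^ n))

theorem gosperCertificate_zero : gosperCertificate a w q z 0 = 0 := by
  simp [gosperCertificate]

theorem gosperCertificate_succ (hq : ‖q‖ < 1) (n : ℕ) :
    gosperCertificate a w q z (n + 1) =
      w * (phi10Term a q z n * (1 - a * q ^ n) * z) / (1 - w * q ^ (n + 1)) := by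
  rw [gosperCertificate, ← phi10Term_succ_mul_one_sub_pow hq]
  ring

theorem tendsto_gosperCertificate (hq : ‖q‖ < 1) (hz : ‖z‖ < 1) :
    Tendsto (gosperCertificate a w q z) atTop (𝓝 0) := by
  unfold gosperCertificate
  simpa using (summable_phi10Term (a := a) hq hz).tendsto_atTop_zero.mul
    (tendsto_comp_pow_of_continuousAt (g := fun x ↦ w * (1 - x) / (1 - w * x)) hq
      (by fun_prop (disch := simp)))

theorem phi21Term_gosper_telescope (hq : ‖q‖ < 1) (hw : ∀ k : ℕ, 1 - w * q ^ (k + 1) ≠ 0)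
    (ha : a * z = μ * q) (hμ : μ - w * z = (1 - w) * q) (n : ℕ) :
    (1 - w * q) * (1 - μ) * phi10Term a q z n - (1 - q) * phi21Term a w (w * q ^ 2) q z n =
      (1 - w * q) * gosperCertificate a w q z n -
        (1 - w * q) * gosperCertificate a w q z (n + 1) := by
  obtain rfl : μ = w * z + (1 - w) * q := by linear_combination hμ
  rw [gosperCertificate_succ hq]
  cases n with
  | zero =>
    -- separate, because `1 - w * q ^ 0` vanishes when `w = 1`
    have hw0 : 1 - w * q ≠ 0 := pow_one q ▸ hw 0
    simp only [phi10Term_zero, phi21Term_zero, gosperCertificate_zero, pow_zero, mul_one,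
      zero_add, pow_one]
    field_simp
    linear_combination (-w) * ha
  | succ m =>
    have hD0 := hw m
    have hD1 := hw (m + 1)
    have hc : qPoch (w * q ^ 2) q (m + 1) ≠ 0 :=
      qPoch_ne_zero fun k _ ↦ by convert hw (k + 1) using 2; ring
    have hT := qPoch_mul_one_sub_mul_one_sub w q (m + 1)
    rw [phi21Term_eq_phi10Term_mul, gosperCertificate]
    field_simp
    linear_combination (-(1 - q) * phi10Term a q z (m + 1)) * hT
      - w * (1 - w * q) * phi10Term a q z (m + 1) * qPoch (w * q ^ 2) q (m + 1)
        * (1 - w * q ^ (m + 1)) * q ^ (m + 1) * ha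

theorem tsum_phi21Term_gosper (hq : ‖q‖ < 1) (hz : ‖z‖ < 1)
    (hw : ∀ k : ℕ, 1 - w * q ^ (k + 1) ≠ 0) (ha : a * z = μ * q)
    (hμ : μ - w * z = (1 - w) * q) :
    ∑' n, phi21Term a w (w * q ^ 2) q z n =
      (1 - w * q) / (1 - q) * (qPochInf μ q / qPochInf z q) := by
  have hsum := ((summable_phi10Term (a := a) hq hz).hasSum.mul_left
    ((1 - w * q) * (1 - μ))).sub
    ((summable_phi21Term (a := a) (b := w) (c := w * q ^ 2) hq hz).hasSum.mul_left (1 - q))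
  have htel := hsum.eq_of_eq_sub_succ (phi21Term_gosper_telescope hq hw ha hμ)
    (by simpa using (tendsto_gosperCertificate hq hz).const_mul (1 - w * q))
  rw [gosperCertificate_zero, mul_zero, sub_eq_zero] at htel
  have hbinom := tsum_phi10Term_mul_qPochInf (a := a) hq hz
  rw [ha] at hbinom
  have h1q : 1 - q ≠ 0 := pow_one q ▸ one_sub_pow_succ_ne_zero hq 0
  rw [qPochInf_eq_one_sub_mul μ hq, ← hbinom]
  field_simp [qPochInf_ne_zero hq hz]
  linear_combination -htel

end Analysis

/-- Yamaguchi's `q`-analogue of Gosper's strange series evaluation. -/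
theorem yamaguchi_q_gosper (q a b lam : ℂ)
    (hq0 : 0 < ‖q‖) (hq1 : ‖q‖ < 1)
    (hb : ∀ k : ℕ, q ^ (b + 1 + (k : ℂ)) ≠ 1)
    (hab : q ^ (a + b) ≠ 1)
    (hlam : lam = (1 - q ^ b) * q ^ (a + 1) / (1 - q ^ (a + b)))
    (hlam1 : ‖lam‖ < 1) :
    ∑' n : ℕ, qPoch (q ^ (1 - a)) q n * qPoch (q ^ b) q n /
        (qPoch q q n * qPoch (q ^ (b + 2)) q n) * lam ^ n
      = (1 - q ^ (b + 1)) / (1 - q) *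
        (qPochInf (lam * q ^ (-a)) q / qPochInf lam q) := by
  have hq : q ≠ 0 := norm_pos_iff.1 hq0
  have hqa : q ^ a ≠ 0 := by simp [Complex.cpow_def, hq]
  have hw (k : ℕ) : 1 - q ^ b * q ^ (k + 1) ≠ 0 := by
    rw [← Complex.cpow_natCast, ← Complex.cpow_add _ _ hq, Nat.cast_succ, ← add_assoc,
      add_right_comm]
    exact sub_ne_zero.2 (hb k).symm
  have ha : q ^ (1 - a) * lam = lam * q ^ (-a) * q := by
    rw [sub_eq_add_neg, Complex.cpow_add _ _ hq, Complex.cpow_one]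
    ring
  have hlam' : lam * (1 - q ^ a * q ^ b) = (1 - q ^ b) * (q ^ a * q) := by
    rw [hlam, ← Complex.cpow_add _ _ hq, div_mul_cancel₀ _ (sub_ne_zero.2 hab.symm),
      Complex.cpow_add _ _ hq, Complex.cpow_one]
  have hμ : lam * q ^ (-a) - q ^ b * lam = (1 - q ^ b) * q := by
    rw [Complex.cpow_neg]
    linear_combination (q ^ a)⁻¹ * hlam' + (q ^ b * lam + (1 - q ^ b) * q) * mul_inv_cancel₀ hqa
  rw [Complex.cpow_add _ _ hq, Complex.cpow_add _ _ hq, Complex.cpow_one, Complex.cpow_ofNat]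
  exact tsum_phi21Term_gosper hq1 hlam1 hw ha hμ
end

section
/- Let 0 < q < 1 and let a, b be real numbers with b ≠ 0, a + b ≠ 0, |b/(a+b)| < 1, q^a ≠ 1, a q^a ≠ b(1 - q^a), a + b ≠ b q^{-a}, and such that p(n) := (b q^{a+n} + a q^{a+n} - a q^a - b q^n)(b q^{a+n+1} + a q^{a+n+1} - a q^a - b q^{n+1}) is nonzero for all integers n ≥ 0. Then (a+b)(1-q)^2 q^{2a-1} ∑_{n=0}^∞ [(q^{1-a};q)_n / (q;q)_n] (bq/(a+b))^n / p(n) equals (a+b)(1-q) q^{2a-1} / [b (1-q^a)(a q^a - b(1-q^a))] − [1 / (q (a + b - b q^{-a}))] · ∑_{n=0}^∞ [(q^{1-a};q)_n (q;q)_n / ((q;q)_n (q^2;q)_n)] (b/(a+b))^n. -/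
/-!
Write `Q = q^a` and `F y = (a + b) Q y - a Q - b y`, so that `p n = F (q^n) F (q^(n+1))`, and
let `u n = (q^(1-a);q)_n / (q;q)_n · (b/(a+b))^n`. Since `u (n+1) / u n` is a rational function
of `E = q^n`, so is the `n`-th term of the left-hand series divided by `u n`, and it splits into
partial fractions as `A (u n / F (q^n) - u (n+1) / F (q^(n+1))) / u n + B (1 - q) / (1 - q^(n+1))`.
The first part telescopes to `A u 0 / F 1` because `u n → 0` and `F (q^n) → -a Q ≠ 0`; the
second is `B` times the term of the right-hand series, as
`(q;q)_n / (q^2;q)_n = (1 - q) / (1 - q^(n+1))`.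
-/

/-- The finite `q`-shifted factorial `(a;q)_n = ∏_{k=0}^{n-1} (1 - a q^k)` over `ℝ`. -/
noncomputable def qPochR (a q : ℝ) (n : ℕ) : ℝ :=
  ∏ k ∈ Finset.range n, (1 - a * q ^ k)

open Filter Topology

lemma qPochR_zero (a q : ℝ) : qPochR a q 0 = 1 := Finset.prod_range_zero _

lemma qPochR_succ (a q : ℝ) (n : ℕ) :
    qPochR a q (n + 1) = qPochR a q n * (1 - a * q ^ n) :=
  Finset.prod_range_succ _ _

lemma qPochR_succ' (a q : ℝ) (n : ℕ) :
    qPochR a q (n + 1) = (1 - a) * qPochR (a * q) q n := by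
  simp only [qPochR, Finset.prod_range_succ', pow_succ, pow_zero, mul_one, mul_assoc, mul_comm]

lemma one_sub_mul_pow_pos {s q : ℝ} (hq0 : 0 < q) (hq1 : q ≤ 1) (hs : s < 1) (k : ℕ) :
    0 < 1 - s * q ^ k := by
  have h1 : q ^ k ≤ 1 := pow_le_one₀ hq0.le hq1
  have h2 : 0 < q ^ k := pow_pos hq0 k
  nlinarith

lemma qPochR_pos {s q : ℝ} (hq0 : 0 < q) (hq1 : q ≤ 1) (hs : s < 1) (n : ℕ) :
    0 < qPochR s q n :=
  Finset.prod_pos fun k _ => one_sub_mul_pow_pos hq0 hq1 hs k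

noncomputable def qTerm (t s q y : ℝ) (n : ℕ) : ℝ :=
  qPochR t q n / qPochR s q n * y ^ n

lemma qTerm_zero (t s q y : ℝ) : qTerm t s q y 0 = 1 := by
  simp [qTerm, qPochR_zero]

lemma qTerm_succ {t s q y : ℝ} {n : ℕ} (hs : qPochR s q (n + 1) ≠ 0) :
    qTerm t s q y (n + 1) = qTerm t s q y n * ((1 - t * q ^ n) / (1 - s * q ^ n) * y) := by
  rw [qPochR_succ] at hs
  have hs0 : qPochR s q n ≠ 0 := left_ne_zero_of_mul hs
  have hs1 : 1 - s * q ^ n ≠ 0 := right_ne_zero_of_mul hs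
  rw [qTerm, qTerm, qPochR_succ, qPochR_succ, pow_succ]
  field_simp

lemma summable_qTerm {t s q y : ℝ} (hq0 : 0 < q) (hq1 : q < 1) (hs : s < 1) (hy : |y| < 1) :
    Summable (qTerm t s q y) := by
  have hratio :
      Tendsto (fun n => ‖(1 - t * q ^ n) / (1 - s * q ^ n) * y‖) atTop (𝓝 |y|) := by
    have hpow := tendsto_pow_atTop_nhds_zero_of_lt_one hq0.le hq1
    have h := (((tendsto_const_nhds (x := (1 : ℝ))).sub (hpow.const_mul t)).div
      ((tendsto_const_nhds (x := (1 : ℝ))).sub (hpow.const_mul s)) (by simp)).mul_const y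
    simpa using h.norm
  obtain ⟨r, hyr, hr1⟩ := exists_between hy
  refine summable_of_ratio_norm_eventually_le hr1 ?_
  filter_upwards [hratio.eventually (eventually_le_nhds hyr)] with n hn
  rw [qTerm_succ (qPochR_pos hq0 hq1.le hs (n + 1)).ne', norm_mul, mul_comm]
  exact mul_le_mul_of_nonneg_right hn (norm_nonneg _)

lemma hasSum_of_eq_telescope_add {L g W : ℕ → ℝ} {A B : ℝ} (hL : Summable L)
    (hW : Summable W) (hg : Tendsto g atTop (𝓝 0))
    (h : ∀ n, L n = A * (g n - g (n + 1)) + B * W n) :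
    HasSum L (A * g 0 + B * ∑' n, W n) := by
  refine hL.hasSum_iff_tendsto_nat.2 ?_
  have hpartial : ∀ n, ∑ i ∈ Finset.range n, L i
      = A * (g 0 - g n) + B * ∑ i ∈ Finset.range n, W i := fun n => by
    simp only [h, Finset.sum_add_distrib, ← Finset.mul_sum, Finset.sum_range_sub']
  simp only [hpartial]
  simpa using ((tendsto_const_nhds.sub hg).const_mul A).add
    (hW.hasSum.tendsto_sum_nat.const_mul B)

def gosperFactor {K : Type*} [Field K] (a b Q y : K) : K := (a + b) * Q * y - a * Q - b * y

lemma gosperFactor_rpow {q : ℝ} (hq : 0 < q) (a b s : ℝ) :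
    b * q ^ (a + s) + a * q ^ (a + s) - a * q ^ a - b * q ^ s
      = gosperFactor a b (q ^ a) (q ^ s) := by
  rw [Real.rpow_add hq, gosperFactor]
  ring

lemma gosper_partial_fraction {K : Type*} [Field K] {a b Q q E : K} (hab : a + b ≠ 0)
    (hQ : Q ≠ 0) (hq : q ≠ 1) (hD : (a + b) * Q - b ≠ 0) (hqE : 1 - q * E ≠ 0)
    (hF0 : gosperFactor a b Q E ≠ 0) (hF1 : gosperFactor a b Q (q * E) ≠ 0) :
    E / (gosperFactor a b Q E * gosperFactor a b Q (q * E))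
      = ((q - 1) * ((a + b) * Q - b))⁻¹ *
          (1 / gosperFactor a b Q E
            - (1 - q / Q * E) / (1 - q * E) * (b / (a + b)) / gosperFactor a b Q (q * E))
        + ((q - 1) * (1 - q) * Q * (a + b) * ((a + b) * Q - b))⁻¹ * ((1 - q) / (1 - q * E)) := by
  have hq' : q - 1 ≠ 0 := sub_ne_zero.2 hq
  have hq'' : 1 - q ≠ 0 := sub_ne_zero.2 hq.symm
  have hEq : 1 - E * q ≠ 0 := by rwa [mul_comm]
  have e0 : gosperFactor a b Q E = (a + b) * Q * E - a * Q - b * E := rfl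
  have e1 : gosperFactor a b Q (q * E) = (a + b) * Q * (q * E) - a * Q - b * (q * E) := rfl
  -- `field_simp` only clears the two linear factors when they are atoms
  generalize gosperFactor a b Q E = F0 at *
  generalize gosperFactor a b Q (q * E) = F1 at *
  field_simp
  subst e0 e1
  ring

section Gosper

variable {q Q a b : ℝ}

lemma gosper_term_eq (hq0 : 0 < q) (hq1 : q < 1) (hab : a + b ≠ 0) (hQ : Q ≠ 0)
    (hD : (a + b) * Q - b ≠ 0) (hF : ∀ n : ℕ, gosperFactor a b Q (q ^ n) ≠ 0) (n : ℕ) :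
    let u := qTerm (q / Q) q q (b / (a + b))
    let F := fun n : ℕ => gosperFactor a b Q (q ^ n)
    u n * (q ^ n / (F n * F (n + 1)))
      = ((q - 1) * ((a + b) * Q - b))⁻¹ * (u n / F n - u (n + 1) / F (n + 1))
        + ((q - 1) * (1 - q) * Q * (a + b) * ((a + b) * Q - b))⁻¹ *
          (u n * ((1 - q) / (1 - q * q ^ n))) := by
  intro u F
  have hu_succ : u (n + 1) = u n * ((1 - q / Q * q ^ n) / (1 - q * q ^ n) * (b / (a + b))) :=
    qTerm_succ (qPochR_pos hq0 hq1.le hq1 (n + 1)).ne'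
  have hF_succ : F (n + 1) = gosperFactor a b Q (q * q ^ n) := by simp only [F, pow_succ']
  have hF1 : gosperFactor a b Q (q * q ^ n) ≠ 0 := hF_succ ▸ hF (n + 1)
  rw [hu_succ, hF_succ, gosper_partial_fraction hab hQ hq1.ne hD
    (one_sub_mul_pow_pos hq0 hq1.le hq1 n).ne' (hF n) hF1]
  ring

lemma hasSum_gosper (hq0 : 0 < q) (hq1 : q < 1) (hab : a + b ≠ 0) (hx : |b / (a + b)| < 1)
    (hQ : Q ≠ 0) (ha : a ≠ 0) (hD : (a + b) * Q - b ≠ 0)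
    (hF : ∀ n : ℕ, gosperFactor a b Q (q ^ n) ≠ 0) :
    let u := qTerm (q / Q) q q (b / (a + b))
    let F := fun n : ℕ => gosperFactor a b Q (q ^ n)
    HasSum (fun n => u n * (q ^ n / (F n * F (n + 1))))
      (((q - 1) * ((a + b) * Q - b))⁻¹ * (u 0 / F 0)
        + ((q - 1) * (1 - q) * Q * (a + b) * ((a + b) * Q - b))⁻¹ *
          ∑' n, u n * ((1 - q) / (1 - q * q ^ n))) := by
  intro u F
  have hpow := tendsto_pow_atTop_nhds_zero_of_lt_one hq0.le hq1
  have hF_lim : Tendsto F atTop (𝓝 (-(a * Q))) := by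
    have h := (hpow.const_mul ((a + b) * Q - b)).sub_const (a * Q)
    rw [mul_zero, zero_sub] at h
    exact h.congr fun n => by simp only [F, gosperFactor]; ring
  have haQ : -(a * Q) ≠ 0 := by simp [ha, hQ]
  have hu : Summable u := summable_qTerm hq0 hq1 hq1 hx
  have hg : Tendsto (fun n => u n / F n) atTop (𝓝 0) := by
    have h := hu.tendsto_atTop_zero.div hF_lim haQ
    rwa [zero_div] at h
  have hL : Summable fun n => u n * (q ^ n / (F n * F (n + 1))) := by
    refine hu.norm.mul_tendsto_const (c := 0 / (-(a * Q) * -(a * Q))) ?_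
    rw [Nat.cofinite_eq_atTop]
    exact hpow.div (hF_lim.mul (hF_lim.comp (tendsto_add_atTop_nat 1))) (mul_ne_zero haQ haQ)
  have hW : Summable fun n => u n * ((1 - q) / (1 - q * q ^ n)) := by
    refine hu.norm.mul_tendsto_const (c := (1 - q) / (1 - q * 0)) ?_
    rw [Nat.cofinite_eq_atTop]
    exact tendsto_const_nhds.div (tendsto_const_nhds.sub (hpow.const_mul q)) (by simp)
  exact hasSum_of_eq_telescope_add hL hW hg (gosper_term_eq hq0 hq1 hab hQ hD hF)

theorem gosper_tsum_eq (hq0 : 0 < q) (hq1 : q < 1) (hb : b ≠ 0) (hab : a + b ≠ 0)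
    (hx : |b / (a + b)| < 1) (hQ : Q ≠ 0) (hQ1 : Q ≠ 1) (ha : a ≠ 0)
    (hD : (a + b) * Q - b ≠ 0) (hF : ∀ n : ℕ, gosperFactor a b Q (q ^ n) ≠ 0) :
    (a + b) * (1 - q) ^ 2 * (Q * Q / q) *
        ∑' n : ℕ, qPochR (q / Q) q n / qPochR q q n * (b * q / (a + b)) ^ n /
          (gosperFactor a b Q (q ^ n) * gosperFactor a b Q (q ^ (n + 1)))
      = (a + b) * (1 - q) * (Q * Q / q) / (b * (1 - Q) * (a * Q - b * (1 - Q)))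
        - (1 / (q * (a + b - b * Q⁻¹))) *
            ∑' n : ℕ, qPochR (q / Q) q n * qPochR q q n /
              (qPochR q q n * qPochR (q ^ 2) q n) * (b / (a + b)) ^ n := by
  have hL n : qPochR (q / Q) q n / qPochR q q n * (b * q / (a + b)) ^ n /
        (gosperFactor a b Q (q ^ n) * gosperFactor a b Q (q ^ (n + 1)))
      = qTerm (q / Q) q q (b / (a + b)) n *
          (q ^ n / (gosperFactor a b Q (q ^ n) * gosperFactor a b Q (q ^ (n + 1)))) := by
    rw [qTerm, mul_div_right_comm b, mul_pow]
    ring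
  have hW n : qPochR (q / Q) q n * qPochR q q n / (qPochR q q n * qPochR (q ^ 2) q n) *
        (b / (a + b)) ^ n
      = qTerm (q / Q) q q (b / (a + b)) n * ((1 - q) / (1 - q * q ^ n)) := by
    have h := qPochR_succ' q q n
    rw [qPochR_succ, ← sq] at h
    have h1 := (one_sub_mul_pow_pos hq0 hq1.le hq1 n).ne'
    have h2 := (qPochR_pos hq0 hq1.le hq1 n).ne'
    have h3 : qPochR (q ^ 2) q n = qPochR q q n * (1 - q * q ^ n) / (1 - q) := by
      rw [h]; field_simp [(sub_pos.2 hq1).ne']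
    rw [h3, qTerm]
    field_simp
  have hg0 :
      qTerm (q / Q) q q (b / (a + b)) 0 / gosperFactor a b Q (q ^ 0) = (b * (Q - 1))⁻¹ := by
    rw [qTerm_zero, pow_zero, gosperFactor, one_div]
    ring_nf
  rw [tsum_congr hL, (hasSum_gosper hq0 hq1 hab hx hQ ha hD hF).tsum_eq, tsum_congr hW, hg0]
  have hQ1' : 1 - Q ≠ 0 := sub_ne_zero.2 hQ1.symm
  have hQ1'' : Q - 1 ≠ 0 := sub_ne_zero.2 hQ1
  have hq : 1 - q ≠ 0 := (sub_pos.2 hq1).ne'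
  have hq' : q - 1 ≠ 0 := (sub_neg.2 hq1).ne
  have hD' : a * Q - b * (1 - Q) ≠ 0 := by contrapose! hD; linear_combination hD
  field_simp
  ring

end Gosper

theorem new_q_gosper_general (q a b : ℝ) (hq0 : 0 < q) (hq1 : q < 1)
    (hb : b ≠ 0) (hab : a + b ≠ 0) (hx : |b / (a + b)| < 1)
    (hqa : q ^ a ≠ 1) (haqa : a * q ^ a ≠ b * (1 - q ^ a))
    (p : ℕ → ℝ)
    (hp : ∀ n : ℕ, p n =
      (b * q ^ (a + n) + a * q ^ (a + n) - a * q ^ a - b * q ^ (n : ℝ)) *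
      (b * q ^ (a + n + 1) + a * q ^ (a + n + 1) - a * q ^ a - b * q ^ ((n : ℝ) + 1)))
    (hpne : ∀ n : ℕ, p n ≠ 0) :
    (a + b) * (1 - q) ^ 2 * q ^ (2 * a - 1) *
        ∑' n : ℕ, (qPochR (q ^ (1 - a)) q n / qPochR q q n) * (b * q / (a + b)) ^ n / p n
      = (a + b) * (1 - q) * q ^ (2 * a - 1) /
          (b * (1 - q ^ a) * (a * q ^ a - b * (1 - q ^ a)))
        - (1 / (q * (a + b - b * q ^ (-a)))) *
            ∑' n : ℕ, qPochR (q ^ (1 - a)) q n * qPochR q q n /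
              (qPochR q q n * qPochR (q ^ 2) q n) * (b / (a + b)) ^ n := by
  have hp_eq :
      p = fun n => gosperFactor a b (q ^ a) (q ^ n) * gosperFactor a b (q ^ a) (q ^ (n + 1)) := by
    funext n
    rw [hp n, add_assoc, gosperFactor_rpow hq0, gosperFactor_rpow hq0, ← Real.rpow_natCast,
      ← Real.rpow_natCast, Nat.cast_succ]
  subst hp_eq
  have hF n : gosperFactor a b (q ^ a) (q ^ n) ≠ 0 := left_ne_zero_of_mul (hpne n)
  have ha : a ≠ 0 := by rintro rfl; exact hqa (Real.rpow_zero q)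
  have hD : (a + b) * q ^ a - b ≠ 0 := by contrapose! haqa; linear_combination haqa
  rw [show 2 * a - 1 = a + a - 1 by ring, Real.rpow_sub hq0, Real.rpow_sub hq0, Real.rpow_add hq0,
    Real.rpow_one, Real.rpow_neg hq0.le]
  exact gosper_tsum_eq hq0 hq1 hb hab hx (Real.rpow_pos_of_pos hq0 a).ne' hqa ha hD hF

/-- The new `q`-analogue of Gosper's strange series evaluation (Theorem 2 of the paper). -/
theorem new_q_gosper (q a b : ℝ) (hq0 : 0 < q) (hq1 : q < 1)
    (hb : b ≠ 0) (hab : a + b ≠ 0) (hx : |b / (a + b)| < 1)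
    (hqa : q ^ a ≠ 1) (haqa : a * q ^ a ≠ b * (1 - q ^ a))
    (habq : a + b ≠ b * q ^ (-a))
    (p : ℕ → ℝ)
    (hp : ∀ n : ℕ, p n =
      (b * q ^ (a + n) + a * q ^ (a + n) - a * q ^ a - b * q ^ (n : ℝ)) *
      (b * q ^ (a + n + 1) + a * q ^ (a + n + 1) - a * q ^ a - b * q ^ ((n : ℝ) + 1)))
    (hpne : ∀ n : ℕ, p n ≠ 0) :
    (a + b) * (1 - q) ^ 2 * q ^ (2 * a - 1) *
        ∑' n : ℕ, (qPochR (q ^ (1 - a)) q n / qPochR q q n) * (b * q / (a + b)) ^ n / p n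
      = (a + b) * (1 - q) * q ^ (2 * a - 1) /
          (b * (1 - q ^ a) * (a * q ^ a - b * (1 - q ^ a)))
        - (1 / (q * (a + b - b * q ^ (-a)))) *
            ∑' n : ℕ, qPochR (q ^ (1 - a)) q n * qPochR q q n /
              (qPochR q q n * qPochR (q ^ 2) q n) * (b / (a + b)) ^ n :=
  new_q_gosper_general q a b hq0 hq1 hb hab hx hqa haqa p hp hpne
end

section
/- Let a and b be positive real numbers. Then ∑_{n=0}^∞ [(1−a)_n (b)_n / ((b+2)_n n!)] (b/(a+b))^n = (b+1) (a/(a+b))^a, where (x)_n = x(x+1)⋯(x+n−1) denotes the shifted factorial with (x)_0 = 1, and (a/(a+b))^a denotes the positive real power. -/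
/-!
Put `x = b / (a + b)`. Since `(b)ₙ / (b + 2)ₙ = b (b + 1) / ((b + n) (b + n + 1))` and
`1 / ((b + n) (b + n + 1)) = ∫₀¹ t ^ (b + n - 1) (1 - t) dt`, the binomial series
`∑ (1 - a)ₙ (x t)ⁿ / n! = (1 - x t) ^ (a - 1)` turns the series into
`b (b + 1) ∫₀¹ t ^ (b - 1) (1 - t) (1 - x t) ^ (a - 1) dt`. Because `(a + b) x = b`, this
integrand is `1 / b` times the derivative of `t ^ b (1 - x t) ^ a`, so the integral is
`(1 - x) ^ a / b`.
-/

open Polynomial MeasureTheory Set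

theorem mul_add_one_mul_ascPochhammer_eval_add_two {R : Type*} [CommSemiring R] (b : R) (n : ℕ) :
    b * (b + 1) * (ascPochhammer R n).eval (b + 2) =
      (ascPochhammer R n).eval b * ((b + n) * (b + n + 1)) := by
  have h := congrArg (eval b) (ascPochhammer_mul R 2 n)
  rw [add_comm 2 n, ascPochhammer_succ_eval, ascPochhammer_succ_eval] at h
  simp only [eval_mul, eval_comp, eval_add, eval_X, eval_ofNat, ascPochhammer_succ_eval,
    ascPochhammer_one, Nat.cast_ofNat, Nat.cast_one, Nat.cast_add] at h
  rw [h]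
  ring

theorem abs_ascPochhammer_eval_le {R : Type*} [CommRing R] [LinearOrder R] [IsStrictOrderedRing R]
    (c : R) (n : ℕ) : |(ascPochhammer R n).eval c| ≤ (ascPochhammer R n).eval |c| := by
  induction n with
  | zero => simp
  | succ n ih =>
    rw [ascPochhammer_succ_eval, ascPochhammer_succ_eval, abs_mul]
    refine mul_le_mul ih ((abs_add_le _ _).trans_eq (by simp)) (abs_nonneg _)
      ((abs_nonneg _).trans ih)

theorem Ring.choose_add_sub_one_eq_ascPochhammer_eval_div {K : Type*} [Field K] [CharZero K]
    (c : K) (n : ℕ) :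
    Ring.choose (c + n - 1) n = (ascPochhammer K n).eval c / n.factorial := by
  rw [Ring.choose_eq_smul, descPochhammer_smeval_eq_ascPochhammer, ascPochhammer_smeval_eq_eval,
    smul_eq_mul, inv_mul_eq_div]
  ring_nf

theorem hasSum_ascPochhammer_eval_div_factorial_mul_pow (c : ℝ) {y : ℝ} (hy : |y| < 1) :
    HasSum (fun n ↦ (ascPochhammer ℝ n).eval c / n.factorial * y ^ n) ((1 - y) ^ (-c)) := by
  have := (Real.one_div_one_sub_rpow_hasFPowerSeriesOnBall_zero c).hasSum (y := y)
    (by simpa [← Real.norm_eq_abs, enorm_eq_nnnorm, ← NNReal.coe_lt_coe] using hy)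
  have h1y : 0 ≤ 1 - y := by linarith [le_abs_self y]
  simpa [FormalMultilinearSeries.ofScalars_apply_eq,
    Ring.choose_add_sub_one_eq_ascPochhammer_eval_div, mul_comm, Real.rpow_neg h1y] using this

theorem summable_abs_ascPochhammer_eval_div_factorial_mul_pow (c : ℝ) {y : ℝ} (hy₀ : 0 ≤ y)
    (hy₁ : y < 1) :
    Summable (fun n ↦ |(ascPochhammer ℝ n).eval c| / n.factorial * y ^ n) :=
  (hasSum_ascPochhammer_eval_div_factorial_mul_pow |c| (by rwa [abs_of_nonneg hy₀])).summable
    |>.of_nonneg_of_le (fun n ↦ by positivity) fun n ↦ by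
      gcongr; exact abs_ascPochhammer_eval_le c n

theorem integrableOn_rpow_sub_one_mul {s : ℝ} (hs : 0 < s) {f : ℝ → ℝ}
    (hf : ContinuousOn f (Icc 0 1)) : IntegrableOn (fun t ↦ t ^ (s - 1) * f t) (Ioc 0 1) := by
  have h := (intervalIntegral.intervalIntegrable_rpow' (a := (0 : ℝ)) (b := 1)
    (show -1 < s - 1 by linarith)).mul_continuousOn (g := f) (by rwa [uIcc_of_le zero_le_one])
  rwa [intervalIntegrable_iff, uIoc_of_le zero_le_one] at h

theorem integral_rpow_sub_one_mul_one_sub_mul_pow {s : ℝ} (hs : 0 < s) (n : ℕ) :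
    ∫ t in Ioc 0 1, t ^ (s - 1) * (1 - t) * t ^ n = 1 / ((s + n) * (s + n + 1)) := by
  have hsn : 0 < s + n := by positivity
  have hpow : EqOn (fun t : ℝ ↦ t ^ (s - 1) * (1 - t) * t ^ n)
      (fun t ↦ t ^ (s + n - 1) - t ^ (s + n)) (Ioc 0 1) := by
    intro t ht
    have e1 : t ^ (s - 1) * t ^ n = t ^ (s + n - 1) := by
      rw [← Real.rpow_natCast, ← Real.rpow_add ht.1, sub_add_eq_add_sub]
    have e2 : t ^ (s + n - 1) * t = t ^ (s + n) := by
      rw [← Real.rpow_add_one ht.1.ne', sub_add_cancel]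
    simp only
    rw [← e2, ← e1]
    ring
  rw [setIntegral_congr_fun measurableSet_Ioc hpow, ← intervalIntegral.integral_of_le zero_le_one,
    intervalIntegral.integral_sub (intervalIntegral.intervalIntegrable_rpow' (by linarith))
      (intervalIntegral.intervalIntegrable_rpow' (by linarith)),
    integral_rpow (Or.inl (by linarith)), integral_rpow (Or.inl (by linarith))]
  simp only [sub_add_cancel, Real.one_rpow, Real.zero_rpow hsn.ne',
    Real.zero_rpow (show s + n + 1 ≠ 0 by positivity), sub_zero]
  field_simp
  ring

theorem hasSum_integral_rpow_sub_one_mul_one_sub_mul_one_sub_rpow {b x : ℝ} (hb : 0 < b)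
    (hx₀ : 0 ≤ x) (hx₁ : x < 1) (c : ℝ) :
    HasSum (fun n ↦ (ascPochhammer ℝ n).eval c / n.factorial * x ^ n / ((b + n) * (b + n + 1)))
      (∫ t in Ioc 0 1, t ^ (b - 1) * (1 - t) * (1 - x * t) ^ (-c)) := by
  set q : ℕ → ℝ := fun n ↦ (ascPochhammer ℝ n).eval c / n.factorial
  set F : ℕ → ℝ → ℝ := fun n t ↦ q n * x ^ n * (t ^ (b - 1) * (1 - t) * t ^ n)
  have hF_int (n : ℕ) : IntegrableOn (F n) (Ioc 0 1) := by
    have h := (integrableOn_rpow_sub_one_mul hb (f := fun t ↦ (1 - t) * t ^ n)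
      (by fun_prop)).const_mul (q n * x ^ n)
    exact IntegrableOn.congr_fun h (fun t _ ↦ by simp only [F]; ring) measurableSet_Ioc
  have hF_norm (n : ℕ) :
      ∫ t in Ioc 0 1, ‖F n t‖ = |q n| * x ^ n / ((b + n) * (b + n + 1)) := by
    have h : EqOn (fun t ↦ ‖F n t‖)
        (fun t ↦ |q n| * x ^ n * (t ^ (b - 1) * (1 - t) * t ^ n)) (Ioc 0 1) := fun t ht ↦ by
      have : 0 ≤ 1 - t := sub_nonneg.2 ht.2
      simp only [F, Real.norm_eq_abs, abs_mul, abs_pow, abs_of_nonneg hx₀, abs_of_nonneg this,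
        abs_of_pos ht.1, abs_of_pos (Real.rpow_pos_of_pos ht.1 _)]
    rw [setIntegral_congr_fun measurableSet_Ioc h, integral_const_mul,
      integral_rpow_sub_one_mul_one_sub_mul_pow hb, mul_one_div]
  have hF_sum : Summable fun n ↦ ∫ t in Ioc 0 1, ‖F n t‖ := by
    refine ((summable_abs_ascPochhammer_eval_div_factorial_mul_pow c hx₀ hx₁).div_const
      (b * (b + 1))).of_nonneg_of_le (fun n ↦ integral_nonneg fun t ↦ norm_nonneg _)
      fun n ↦ ?_
    rw [hF_norm, abs_div, Nat.abs_cast]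
    gcongr <;> simp
  have hF_tsum : EqOn (fun t ↦ ∑' n, F n t)
      (fun t ↦ t ^ (b - 1) * (1 - t) * (1 - x * t) ^ (-c)) (Ioc 0 1) := fun t ht ↦ by
    have hxt : |x * t| < 1 := by
      rw [abs_of_nonneg (mul_nonneg hx₀ ht.1.le)]; nlinarith [ht.1, ht.2]
    dsimp only
    rw [← ((hasSum_ascPochhammer_eval_div_factorial_mul_pow c hxt).mul_left
      (t ^ (b - 1) * (1 - t))).tsum_eq]
    exact tsum_congr fun n ↦ by simp only [F, q]; ring
  have hF_integral (n : ℕ) :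
      ∫ t in Ioc 0 1, F n t = q n * x ^ n / ((b + n) * (b + n + 1)) := by
    rw [integral_const_mul, integral_rpow_sub_one_mul_one_sub_mul_pow hb, mul_one_div]
  have := hasSum_integral_of_summable_integral_norm hF_int hF_sum
  rwa [setIntegral_congr_fun measurableSet_Ioc hF_tsum, funext hF_integral] at this

theorem hasDerivAt_rpow_mul_one_sub_mul_rpow (a b : ℝ) {x t : ℝ} (ht : 0 < t)
    (hxt : 0 < 1 - x * t) :
    HasDerivAt (fun s ↦ s ^ b * (1 - x * s) ^ a)
      (t ^ (b - 1) * (1 - x * t) ^ (a - 1) * (b - (a + b) * x * t)) t := by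
  have hlin : HasDerivAt (fun s ↦ 1 - x * s) (-x) t := by
    simpa using ((hasDerivAt_id t).const_mul x).const_sub 1
  refine ((Real.hasDerivAt_rpow_const (p := b) (Or.inl ht.ne')).mul
    (hlin.rpow_const (p := a) (Or.inl hxt.ne'))).congr_deriv ?_
  have e1 : t ^ b = t ^ (b - 1) * t := by rw [← Real.rpow_add_one ht.ne', sub_add_cancel]
  have e2 : (1 - x * t) ^ a = (1 - x * t) ^ (a - 1) * (1 - x * t) := by
    rw [← Real.rpow_add_one hxt.ne', sub_add_cancel]
  rw [e1, e2]
  ring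

theorem integral_rpow_sub_one_mul_one_sub_mul_one_sub_rpow {a b x : ℝ} (hb : 0 < b) (hx : x < 1)
    (hab : (a + b) * x = b) :
    ∫ t in Ioc 0 1, t ^ (b - 1) * (1 - t) * (1 - x * t) ^ (a - 1) = (1 - x) ^ a / b := by
  have hpos : ∀ t ∈ Icc (0 : ℝ) 1, 0 < 1 - x * t := fun t ht ↦ by
    nlinarith [mul_le_mul_of_nonneg_right hx.le ht.1, ht.2]
  have hderiv : ∀ t ∈ Ioo (0 : ℝ) 1, HasDerivAt (fun s ↦ s ^ b * (1 - x * s) ^ a / b)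
      (t ^ (b - 1) * (1 - t) * (1 - x * t) ^ (a - 1)) t := fun t ht ↦ by
    refine ((hasDerivAt_rpow_mul_one_sub_mul_rpow a b ht.1
      (hpos t (Ioo_subset_Icc_self ht))).div_const b).congr_deriv ?_
    field_simp
    linear_combination (-(t ^ (b - 1) * (1 - x * t) ^ (a - 1) * t)) * hab
  have hcont_rpow (p : ℝ) : ContinuousOn (fun s ↦ (1 - x * s) ^ p) (Icc 0 1) :=
    ContinuousOn.rpow_const (by fun_prop) fun t ht ↦ Or.inl (hpos t ht).ne'
  have hcont : ContinuousOn (fun s ↦ s ^ b * (1 - x * s) ^ a / b) (Icc 0 1) :=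
    ((ContinuousOn.rpow_const (by fun_prop) fun _ _ ↦ Or.inr hb.le).mul
      (hcont_rpow a)).div_const b
  have hint : IntervalIntegrable (fun t ↦ t ^ (b - 1) * (1 - t) * (1 - x * t) ^ (a - 1))
      volume 0 1 := by
    rw [intervalIntegrable_iff_integrableOn_Ioc_of_le zero_le_one]
    simpa only [mul_assoc] using integrableOn_rpow_sub_one_mul hb
      (f := fun t ↦ (1 - t) * (1 - x * t) ^ (a - 1))
      (ContinuousOn.mul (by fun_prop) (hcont_rpow (a - 1)))
  rw [← intervalIntegral.integral_of_le zero_le_one,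
    intervalIntegral.integral_eq_sub_of_hasDerivAt_of_le zero_le_one hcont hderiv hint]
  simp [Real.zero_rpow hb.ne']

/-- Gosper's strange series evaluation:
`₂F₁[1-a, b; b+2; b/(a+b)] = (b+1) (a/(a+b))^a` for positive reals `a`, `b`. -/
theorem gosper_strange_series (a b : ℝ) (ha : 0 < a) (hb : 0 < b) :
    ∑' n : ℕ, (ascPochhammer ℝ n).eval (1 - a) * (ascPochhammer ℝ n).eval b /
        ((ascPochhammer ℝ n).eval (b + 2) * n.factorial) * (b / (a + b)) ^ n
      = (b + 1) * (a / (a + b)) ^ a := by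
  have hab : 0 < a + b := by linarith
  set x := b / (a + b) with hx
  have hx₁ : x < 1 := (div_lt_one hab).2 (by linarith)
  have hxab : (a + b) * x = b := mul_div_cancel₀ b hab.ne'
  have hsum := (hasSum_integral_rpow_sub_one_mul_one_sub_mul_one_sub_rpow hb (by positivity) hx₁
    (1 - a)).mul_left (b * (b + 1))
  rw [neg_sub, integral_rpow_sub_one_mul_one_sub_mul_one_sub_rpow hb hx₁ hxab] at hsum
  have hterm (n : ℕ) : (ascPochhammer ℝ n).eval (1 - a) * (ascPochhammer ℝ n).eval b /
        ((ascPochhammer ℝ n).eval (b + 2) * n.factorial) * x ^ n =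
      b * (b + 1) * ((ascPochhammer ℝ n).eval (1 - a) / n.factorial * x ^ n /
        ((b + n) * (b + n + 1))) := by
    have := (ascPochhammer_pos n (b + 2) (by linarith)).ne'
    field_simp
    linear_combination (-(ascPochhammer ℝ n).eval (1 - a) * x ^ n) *
      mul_add_one_mul_ascPochhammer_eval_add_two b n
  calc _ = _ := tsum_congr hterm
    _ = b * (b + 1) * ((1 - x) ^ a / b) := hsum.tsum_eq
    _ = (b + 1) * (1 - x) ^ a := by field_simp
    _ = (b + 1) * (a / (a + b)) ^ a := by rw [hx, one_sub_div hab.ne', add_sub_cancel_right]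
end

section
/- The double series ∑_{m≥0, n≥1} [C(2n,n) / ((m+n+1) n (n+1))] · [n ((2n+1)/(n+1))^m − (n+1) ((2n−1)/n)^m] / (8^m 16^n) converges and equals 16 − 8√3 + 8 ln(7 (2 + √3)^2 / 128), where C(2n,n) is the central binomial coefficient. -/
/-!
Split the summand at `(m, n + 1)` as `w_{n+1}(m, n) - w_n(m, n)`, where `w_c(m, n)` (`abelTerm`)
is `C(2n+2, n+1) / 16^(n+1) · ((2c+1) / (8(c+1)))^m / ((m+n+2)(c+1))`. The recurrence
`(n+2) C(2n+4, n+2) = 2(2n+3) C(2n+2, n+1)` gives `w_{n+1}(m, n+1) = w_{n+1}(m+1, n)`, so the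
double sum telescopes to `∑_n w_{n+1}(0, n) - ∑_m w_0(m, 0)`. The second sum is the logarithmic
series `8 ∑_{k ≥ 2} 8^(-k) / k = -8 log (7/8) - 1`. The first is
`16 ∑_{k ≥ 1} catalan k · 16^(-(k+1)) / (k+1)`, a value of the primitive
`log ((1 + √(1-4x)) / 2) + 1 - √(1-4x)` of the Catalan generating function
`2 / (1 + √(1-4x))`.
-/

open Real

theorem hasSum_prod_sub_of_shift {E : Type*} [NormedAddCommGroup E] [CompleteSpace E]
    {f g : ℕ → ℕ → E} (hf : Summable fun p : ℕ × ℕ => f p.1 p.2)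
    (hg : Summable fun p : ℕ × ℕ => g p.1 p.2) (hshift : ∀ m n, g m (n + 1) = f (m + 1) n) :
    HasSum (fun p : ℕ × ℕ => f p.1 p.2 - g p.1 p.2) (∑' n, f 0 n - ∑' m, g m 0) := by
  have hF : HasSum (fun m => ∑' n, f m n) (∑' p : ℕ × ℕ, f p.1 p.2) :=
    hf.hasSum.prod_fiberwise fun m => (hf.prod_factor m).hasSum
  have hG : HasSum (fun m => ∑' n, g m n) (∑' p : ℕ × ℕ, g p.1 p.2) :=
    hg.hasSum.prod_fiberwise fun m => (hg.prod_factor m).hasSum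
  have hrow (m : ℕ) : ∑' n, g m n = g m 0 + ∑' n, f (m + 1) n := by
    simp_rw [(hg.prod_factor m).tsum_eq_zero_add, hshift]
  have hFtail : HasSum (fun m => ∑' n, f (m + 1) n)
      (∑' p : ℕ × ℕ, f p.1 p.2 - ∑' n, f 0 n) := by
    simpa using (hasSum_nat_add_iff' 1).mpr hF
  have hcol : HasSum (fun m => g m 0)
      (∑' p : ℕ × ℕ, g p.1 p.2 - (∑' p : ℕ × ℕ, f p.1 p.2 - ∑' n, f 0 n)) := by
    simpa [hrow] using hG.sub hFtail
  convert hf.hasSum.sub hg.hasSum using 1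
  rw [hcol.tsum_eq]
  abel

theorem catalan_le_four_pow (n : ℕ) : catalan n ≤ 4 ^ n :=
  calc catalan n ≤ (n + 1) * catalan n := Nat.le_mul_of_pos_left _ n.succ_pos
    _ = n.centralBinom := succ_mul_catalan_eq_centralBinom n
    _ ≤ 4 ^ n := Nat.centralBinom_le_four_pow n

theorem norm_catalan_mul_pow_le (x : ℝ) (k : ℕ) :
    ‖(catalan k : ℝ) * x ^ k‖ ≤ (4 * |x|) ^ k := by
  rw [norm_mul, norm_pow, Real.norm_natCast, Real.norm_eq_abs, mul_pow]
  gcongr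
  exact_mod_cast catalan_le_four_pow k

theorem summable_catalan_mul_pow {x : ℝ} (hx : |x| < 1 / 4) :
    Summable fun k => (catalan k : ℝ) * x ^ k :=
  .of_norm_bounded (summable_geometric_of_lt_one (by positivity) (by linarith))
    (norm_catalan_mul_pow_le x)

theorem tsum_catalan_mul_pow_sq_mul_add_one {x : ℝ} (hx : |x| < 1 / 4) :
    (∑' k, (catalan k : ℝ) * x ^ k) ^ 2 * x + 1 = ∑' k, (catalan k : ℝ) * x ^ k := by
  have hs := summable_catalan_mul_pow hx
  have hnorm : Summable fun k => ‖(catalan k : ℝ) * x ^ k‖ :=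
    .of_nonneg_of_le (fun _ => norm_nonneg _) (norm_catalan_mul_pow_le x)
      (summable_geometric_of_lt_one (by positivity) (by linarith))
  have hconv : ∀ n, ∑ kl ∈ Finset.HasAntidiagonal.antidiagonal n,
      (catalan kl.1 : ℝ) * x ^ kl.1 * ((catalan kl.2 : ℝ) * x ^ kl.2) =
        catalan (n + 1) * x ^ n := by
    intro n
    rw [catalan_succ', Nat.cast_sum, Finset.sum_mul]
    refine Finset.sum_congr rfl fun kl hkl => ?_
    rw [← Finset.HasAntidiagonal.mem_antidiagonal.mp hkl, pow_add]
    push_cast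
    ring
  rw [sq, tsum_mul_tsum_eq_tsum_sum_antidiagonal_of_summable_norm hnorm hnorm]
  simp_rw [hconv, ← tsum_mul_right, mul_assoc, ← pow_succ]
  rw [hs.tsum_eq_zero_add]
  simp [add_comm]

theorem hasSum_catalan_mul_pow {x : ℝ} (h0 : 0 ≤ x) (h1 : x < 3 / 16) :
    HasSum (fun k => (catalan k : ℝ) * x ^ k) (2 / (1 + √(1 - 4 * x))) := by
  have hx : |x| < 1 / 4 := by rw [abs_of_nonneg h0]; linarith
  set T := ∑' k, (catalan k : ℝ) * x ^ k
  set u := √(1 - 4 * x)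
  have hu2 : u ^ 2 = 1 - 4 * x := Real.sq_sqrt (by linarith)
  have hu : 1 / 2 < u := (Real.lt_sqrt (by norm_num)).mpr (by linarith)
  have hquad := tsum_catalan_mul_pow_sq_mul_add_one hx
  have hT : T * (1 - 4 * x) ≤ 1 := by
    have hle : T ≤ ∑' k, (4 * x) ^ k :=
      (summable_catalan_mul_pow hx).tsum_le_tsum
        (fun k => by
          simpa [abs_of_nonneg h0] using (le_abs_self _).trans (norm_catalan_mul_pow_le x k))
        (summable_geometric_of_lt_one (by positivity) (by linarith))
    rw [tsum_geometric_of_lt_one (by positivity) (by linarith)] at hle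
    rwa [← le_div_iff₀ (by linarith), one_div]
  have hT0 : 0 ≤ T := tsum_nonneg fun k => by positivity
  -- The roots of `x T² - T + 1` are `2 / (1 ± u)`; the geometric bound `T ≤ 1 / u²` excludes
  -- `2 / (1 - u)` as long as `u > 1/2`, which is where `x < 3/16` comes from.
  have hroots : (T * (1 + u) - 2) * (T * (1 - u) - 2) = 0 := by
    linear_combination 4 * hquad - T ^ 2 * hu2
  have hnot_other : T * (1 - u) - 2 ≠ 0 := by
    intro h
    have hTpos : 0 < T := hT0.lt_of_ne fun hT' => by rw [← hT'] at h; linarith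
    rw [← hu2] at hT
    nlinarith [mul_pos hTpos (mul_pos (by linarith : 0 < 2 * u - 1) (by linarith : 0 < u + 1))]
  have hTval : T = 2 / (1 + u) := by
    rw [eq_div_iff (by positivity)]
    linarith [(mul_eq_zero.mp hroots).resolve_right hnot_other]
  exact hTval ▸ (summable_catalan_mul_pow hx).hasSum

noncomputable def catalanPrimitive (x : ℝ) : ℝ :=
  log ((1 + √(1 - 4 * x)) / 2) + 1 - √(1 - 4 * x)

theorem hasDerivAt_catalanPrimitive {x : ℝ} (hx : x < 1 / 4) :
    HasDerivAt catalanPrimitive (2 / (1 + √(1 - 4 * x))) x := by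
  have hpos : 0 < 1 - 4 * x := by linarith
  have hsqrt : HasDerivAt (fun y => √(1 - 4 * y)) (-4 / (2 * √(1 - 4 * x))) x := by
    simpa using (((hasDerivAt_id x).const_mul 4).const_sub 1).sqrt hpos.ne'
  have hlog := ((hsqrt.const_add 1).div_const 2).log (by positivity)
  refine ((hlog.add_const 1).sub hsqrt).congr_deriv ?_
  field_simp
  ring

theorem hasDerivAt_tsum_catalan_mul_pow_succ_div {x : ℝ} (hx : |x| < 1 / 4) :
    HasDerivAt (fun y => ∑' k, (catalan k : ℝ) * y ^ (k + 1) / (k + 1))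
      (∑' k, (catalan k : ℝ) * x ^ k) x := by
  obtain ⟨r, hxr, hr⟩ := exists_between hx
  refine hasDerivAt_tsum_of_isPreconnected (t := Set.Ioo (-r) r) (y₀ := 0)
    (g := fun k y => (catalan k : ℝ) * y ^ (k + 1) / (k + 1))
    (g' := fun k y => (catalan k : ℝ) * y ^ k)
    (summable_geometric_of_lt_one (by linarith [abs_nonneg x]) (by linarith : 4 * r < 1))
    isOpen_Ioo (convex_Ioo _ _).isPreconnected (fun k y _ => ?_) (fun k y hy => ?_)
    ⟨by linarith [abs_nonneg x], by linarith [abs_nonneg x]⟩ (by simp) (abs_lt.mp hxr)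
  · refine (((hasDerivAt_pow (k + 1) y).const_mul (catalan k : ℝ)).div_const
      ((k : ℝ) + 1)).congr_deriv ?_
    rw [Nat.add_sub_cancel]
    push_cast
    field_simp
  · refine (norm_catalan_mul_pow_le y k).trans ?_
    gcongr
    exact (abs_lt.mpr hy).le

theorem hasSum_catalan_mul_pow_succ_div {x : ℝ} (h0 : 0 ≤ x) (h1 : x < 3 / 16) :
    HasSum (fun k => (catalan k : ℝ) * x ^ (k + 1) / (k + 1)) (catalanPrimitive x) := by
  have hsum : Summable fun k => (catalan k : ℝ) * x ^ (k + 1) / (k + 1) := by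
    refine .of_nonneg_of_le (fun k => by positivity) (fun k => ?_)
      ((summable_catalan_mul_pow (x := x) (abs_lt.mpr ⟨by linarith, by linarith⟩)).mul_left x)
    refine (div_le_self (by positivity) ?_).trans_eq (by ring)
    linarith [(k.cast_nonneg : (0 : ℝ) ≤ k)]
  have habs {y : ℝ} (hy : y ∈ Set.Icc 0 x) : |y| < 1 / 4 :=
    abs_lt.mpr ⟨by linarith [hy.1], by linarith [hy.2]⟩
  have hseries {y : ℝ} (hy : y ∈ Set.Icc 0 x) :=
    hasDerivAt_tsum_catalan_mul_pow_succ_div (habs hy)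
  have hprim {y : ℝ} (hy : y ∈ Set.Icc 0 x) :=
    hasDerivAt_catalanPrimitive (x := y) (by linarith [hy.2])
  have heq := eq_of_has_deriv_right_eq
    (fun y hy => by
      rw [← (hasSum_catalan_mul_pow hy.1 (by linarith [hy.2])).tsum_eq]
      exact (hseries (Set.Ico_subset_Icc_self hy)).hasDerivWithinAt)
    (fun y hy => (hprim (Set.Ico_subset_Icc_self hy)).hasDerivWithinAt)
    (fun y hy => (hseries hy).continuousAt.continuousWithinAt)
    (fun y hy => (hprim hy).continuousAt.continuousWithinAt)
    (by simp [catalanPrimitive]) x ⟨h0, le_rfl⟩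
  exact heq ▸ hsum.hasSum

noncomputable def abelTerm (c m n : ℕ) : ℝ :=
  (n + 1).centralBinom / 16 ^ (n + 1) * ((2 * c + 1 : ℝ) / (8 * (c + 1))) ^ m /
    (((m : ℝ) + n + 2) * (c + 1))

theorem abelTerm_nonneg (c m n : ℕ) : 0 ≤ abelTerm c m n := by
  unfold abelTerm
  positivity

theorem abelTerm_le (c m n : ℕ) : abelTerm c m n ≤ (1 / 4) ^ m * (1 / 4) ^ n := by
  have hcb : ((n + 1).centralBinom : ℝ) / 16 ^ (n + 1) ≤ (1 / 4) ^ n :=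
    calc ((n + 1).centralBinom : ℝ) / 16 ^ (n + 1) ≤ 4 ^ (n + 1) / 16 ^ (n + 1) := by
          gcongr
          exact_mod_cast Nat.centralBinom_le_four_pow _
      _ = (1 / 4) ^ (n + 1) := by rw [← div_pow]; norm_num
      _ ≤ (1 / 4) ^ n := pow_le_pow_of_le_one (by norm_num) (by norm_num) n.le_succ
  have hratio : ((2 * c + 1 : ℝ) / (8 * (c + 1))) ^ m ≤ (1 / 4) ^ m := by
    refine pow_le_pow_left₀ (by positivity) ?_ m
    rw [div_le_iff₀ (by positivity)]
    linarith
  have hden : (1 : ℝ) ≤ ((m : ℝ) + n + 2) * (c + 1) := by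
    nlinarith [(m.cast_nonneg : (0 : ℝ) ≤ m), (n.cast_nonneg : (0 : ℝ) ≤ n),
      (c.cast_nonneg : (0 : ℝ) ≤ c)]
  calc abelTerm c m n
      ≤ (n + 1).centralBinom / 16 ^ (n + 1) * ((2 * c + 1 : ℝ) / (8 * (c + 1))) ^ m :=
        div_le_self (by positivity) hden
    _ ≤ (1 / 4) ^ n * (1 / 4) ^ m := by gcongr
    _ = (1 / 4) ^ m * (1 / 4) ^ n := mul_comm _ _

theorem summable_abelTerm (c : ℕ → ℕ) :
    Summable fun p : ℕ × ℕ => abelTerm (c p.2) p.1 p.2 :=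
  have hgeom : Summable fun k : ℕ => (1 / 4 : ℝ) ^ k :=
    summable_geometric_of_lt_one (by norm_num) (by norm_num)
  .of_nonneg_of_le (fun _ => abelTerm_nonneg ..) (fun _ => abelTerm_le ..)
    (hgeom.mul_of_nonneg hgeom (fun _ => by positivity) (fun _ => by positivity))

theorem abelTerm_shift (m n : ℕ) : abelTerm (n + 1) m (n + 1) = abelTerm (n + 1) (m + 1) n := by
  have hrec : ((n + 1 + 1).centralBinom : ℝ) =
      2 * (2 * n + 3) * (n + 1).centralBinom / (n + 2) := by
    rw [eq_div_iff (by positivity)]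
    have := Nat.succ_mul_centralBinom_succ (n + 1)
    push_cast [← Nat.cast_inj (R := ℝ)] at this
    linear_combination this
  simp only [abelTerm, pow_succ _ m, hrec]
  set q := (2 * ((n + 1 : ℕ) : ℝ) + 1) / (8 * ((n + 1 : ℕ) + 1)) with hq
  have hq' : q * (8 * (n + 2)) = 2 * n + 3 := by
    rw [hq]
    push_cast
    field_simp
    ring
  push_cast
  field_simp
  linear_combination (-2 * ((n + 1).centralBinom : ℝ) * q ^ m * 16 ^ (n + 1) * (m + n + 3)) * hq'

theorem hasSum_abelTerm_zero_zero :
    HasSum (fun m => abelTerm 0 m 0) (-8 * log (7 / 8) - 1) := by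
  have h := (hasSum_nat_add_iff' 1).mpr
    (hasSum_pow_div_log_of_abs_lt_one (x := 1 / 8) (by norm_num [abs_of_pos]))
  norm_num at h
  rw [show -8 * log (7 / 8) - 1 = 8 * (-log (7 / 8) - 1 / 8) by ring]
  refine (h.mul_left 8).congr_fun fun m => ?_
  simp only [abelTerm, Nat.centralBinom, zero_add, mul_one, Nat.choose_succ_self_right,
    Nat.reduceAdd, Nat.cast_ofNat, pow_one, CharP.cast_eq_zero, mul_zero, one_div, inv_pow,
    add_zero]
  field_simp
  ring

theorem hasSum_abelTerm_succ_zero :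
    HasSum (fun n => abelTerm (n + 1) 0 n) (16 * catalanPrimitive (1 / 16) - 1) := by
  have h := (hasSum_nat_add_iff' 1).mpr
    (hasSum_catalan_mul_pow_succ_div (x := 1 / 16) (by norm_num) (by norm_num))
  norm_num at h
  rw [show 16 * catalanPrimitive (1 / 16) - 1 = 16 * (catalanPrimitive (1 / 16) - 1 / 16) by ring]
  refine (h.mul_left 16).congr_fun fun n => ?_
  simp only [abelTerm, ← succ_mul_catalan_eq_centralBinom, one_div, inv_pow]
  push_cast
  field_simp
  ring

theorem catalanPrimitive_one_div_sixteen :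
    catalanPrimitive (1 / 16) = log ((2 + √3) / 4) + 1 - √3 / 2 := by
  have hsqrt : √(1 - 4 * (1 / 16) : ℝ) = √3 / 2 := by
    rw [show (1 - 4 * (1 / 16) : ℝ) = 3 / 2 ^ 2 by norm_num, Real.sqrt_div' _ (by positivity),
      Real.sqrt_sq (by norm_num)]
  rw [catalanPrimitive, hsqrt]
  ring_nf

/-- A double-series evaluation obtained from the modified Abel summation technique
applied to `B_n = x^n C(2n,n)/16^n` together with an integration argument.
The index `p : ℕ × ℕ` encodes `m = p.1 ≥ 0` and `n = p.2 + 1 ≥ 1`. -/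
theorem double_series_eval :
    HasSum
      (fun p : ℕ × ℕ =>
        let m : ℝ := p.1
        let n : ℝ := p.2 + 1
        (Nat.choose (2 * (p.2 + 1)) (p.2 + 1) : ℝ) / ((m + n + 1) * n * (n + 1)) *
          ((n * ((2 * n + 1) / (n + 1)) ^ p.1 - (n + 1) * ((2 * n - 1) / n) ^ p.1) /
            (8 ^ p.1 * 16 ^ (p.2 + 1))))
      (16 - 8 * Real.sqrt 3 + 8 * Real.log (7 * (2 + Real.sqrt 3) ^ 2 / 128)) := by
  have hsum := hasSum_prod_sub_of_shift (f := fun m n => abelTerm (n + 1) m n)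
    (g := fun m n => abelTerm n m n) (summable_abelTerm (· + 1)) (summable_abelTerm id)
    abelTerm_shift
  rw [hasSum_abelTerm_succ_zero.tsum_eq, hasSum_abelTerm_zero_zero.tsum_eq,
    catalanPrimitive_one_div_sixteen] at hsum
  have hvalue : 16 * (log ((2 + √3) / 4) + 1 - √3 / 2) - 1 - (-8 * log (7 / 8) - 1) =
      16 - 8 * √3 + 8 * log (7 * (2 + √3) ^ 2 / 128) := by
    rw [show 7 * (2 + √3) ^ 2 / 128 = ((2 + √3) / 4) ^ 2 * (7 / 8) by ring,
      log_mul (by positivity) (by norm_num), log_pow]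
    push_cast
    ring
  refine (hvalue ▸ hsum).congr_fun fun p => ?_
  simp only [abelTerm, Nat.centralBinom_eq_two_mul_choose, div_pow, mul_pow]
  push_cast
  field_simp
  ring
end
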